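/- Let A₁ and A₂ be independent random points, each uniformly distributed on the closed unit ball B_d = {x ∈ ℝ^d : ‖x‖ ≤ 1} of ℝ^d (d ≥ 1). Then the probability that the orthogonal projection O' of the origin onto the affine span of {A₁, A₂} (almost surely a line) does not belong to the closed segment [A₁, A₂] equals 2^{−d}. -/

import Mathlib

open MeasureTheory ProbabilityTheory Metric Real

noncomputable section

/-- Uniform probability measure on the closed unit ball of `ℝ^d`. -/
def unifBall (d : ℕ) : Measure (EuclideanSpace ℝ (Fin d)) :=
  (volume (Metric.closedBall (0 : EuclideanSpace ℝ (Fin d)) 1))⁻¹ •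
    volume.restrict (Metric.closedBall (0 : EuclideanSpace ℝ (Fin d)) 1)

-- Circumcenter of `n+1` points in `ℝ^d` (junk value `0` if not affinely independent).
open Classical in
def circCenter {d n : ℕ} (p : Fin (n + 1) → EuclideanSpace ℝ (Fin d)) :
    EuclideanSpace ℝ (Fin d) :=
  if h : AffineIndependent ℝ p then
    (⟨p, h⟩ : Affine.Simplex ℝ (EuclideanSpace ℝ (Fin d)) n).circumcenter else 0

-- Circumradius of `n+1` points in `ℝ^d` (junk value `0` if not affinely independent).
open Classical in
def circRadius {d n : ℕ} (p : Fin (n + 1) → EuclideanSpace ℝ (Fin d)) : ℝ :=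
  if h : AffineIndependent ℝ p then
    (⟨p, h⟩ : Affine.Simplex ℝ (EuclideanSpace ℝ (Fin d)) n).circumradius else 0

/-- The circumsphere `{x ∈ L : dist (x, C) = Ω}` as a subset of `ℝ^d`. -/
def circSphereSet {d n : ℕ} (p : Fin (n + 1) → EuclideanSpace ℝ (Fin d)) :
    Set (EuclideanSpace ℝ (Fin d)) :=
  {x | x ∈ affineSpan ℝ (Set.range p) ∧ dist x (circCenter p) = circRadius p}

/-- `H = dist (O, O')`: the distance from the origin to the affine span. -/
def flatDist {d n : ℕ} (p : Fin (n + 1) → EuclideanSpace ℝ (Fin d)) : ℝ :=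
  Metric.infDist 0 (affineSpan ℝ (Set.range p) : Set (EuclideanSpace ℝ (Fin d)))

/-- `Δ = dist (O', C)`; by Pythagoras (`C` lies in the flat), `Δ² = ‖C‖² − H²`. -/
def deltaDist {d n : ℕ} (p : Fin (n + 1) → EuclideanSpace ℝ (Fin d)) : ℝ :=
  Real.sqrt (‖circCenter p‖ ^ 2 - flatDist p ^ 2)

/-- Euler beta function. -/
def realBeta (a b : ℝ) : ℝ := Real.Gamma a * Real.Gamma b / Real.Gamma (a + b)

/-- Gauss hypergeometric function `₂F₁`. -/
def hyp2F1 (a b c x : ℝ) : ℝ :=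
  ∑' k : ℕ, (ascPochhammer ℝ k).eval a * (ascPochhammer ℝ k).eval b /
    ((ascPochhammer ℝ k).eval c * (Nat.factorial k)) * x ^ k

/-- The beta distribution `Beta(a,b)` on `(0,1)`. -/
def betaMeasure (a b : ℝ) : Measure ℝ :=
  (volume.restrict (Set.Ioo (0:ℝ) 1)).withDensity
    (fun x => ENNReal.ofReal (x ^ (a - 1) * (1 - x) ^ (b - 1) / realBeta a b))

/-- The regularized incomplete beta function `I_x(a,b)`. -/
def regIncBeta (x a b : ℝ) : ℝ :=
  (∫ u in (0:ℝ)..x, u ^ (a - 1) * (1 - u) ^ (b - 1)) / realBeta a b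



/-- Orthogonal projection of the origin onto the line through `a` and `b`
(junk value `a` when `a = b`). -/
def proj0 {d : ℕ} (a b : EuclideanSpace ℝ (Fin d)) : EuclideanSpace ℝ (Fin d) :=
  a + (((inner ℝ ((0 : EuclideanSpace ℝ (Fin d)) - a) (b - a) : ℝ)) / ‖b - a‖ ^ 2) • (b - a)

variable {d : ℕ}


lemma proj0_notMem_iff {d : ℕ} (a b : EuclideanSpace ℝ (Fin d)) :
    proj0 a b ∉ segment ℝ a b ↔
      (0 < (inner ℝ a (b - a) : ℝ) ∨ 0 < (inner ℝ b (a - b) : ℝ)) := by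
  rcases eq_or_ne a b with rfl | hab
  · simp [proj0, segment_same]
  · have hv : b - a ≠ 0 := sub_ne_zero.2 (Ne.symm hab)
    have hv2 : (0:ℝ) < ‖b - a‖ ^ 2 := by
      have := norm_pos_iff.2 hv
      positivity
    set num : ℝ := (inner ℝ ((0 : EuclideanSpace ℝ (Fin d)) - a) (b - a) : ℝ) with hnum
    set t : ℝ := num / ‖b - a‖ ^ 2 with ht
    have hmem : proj0 a b ∈ segment ℝ a b ↔ t ∈ Set.Icc (0:ℝ) 1 := by
      rw [segment_eq_image' ℝ a b]
      constructor
      · rintro ⟨θ, hθ, heq⟩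
        have hform : proj0 a b = a + t • (b - a) := rfl
        rw [hform] at heq
        have h3 : θ • (b - a) = t • (b - a) := add_left_cancel heq
        have : θ = t := smul_left_injective ℝ hv h3
        exact this ▸ hθ
      · intro htt
        exact ⟨t, htt, rfl⟩
    have hnum' : num = -(inner ℝ a (b - a) : ℝ) := by
      rw [hnum, zero_sub, inner_neg_left]
    have hbab : (inner ℝ b (a - b) : ℝ) = -(inner ℝ a (b - a) : ℝ) - ‖b - a‖ ^ 2 := by
      have h1 : ‖b - a‖ ^ 2 = (inner ℝ (b-a) (b-a) : ℝ) := (real_inner_self_eq_norm_sq _).symm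
      simp only [inner_sub_left, inner_sub_right] at *
      nlinarith [real_inner_comm a b]
    constructor
    · intro h
      have : ¬ (t ∈ Set.Icc (0:ℝ) 1) := fun h' => h (hmem.2 h')
      simp only [Set.mem_Icc, not_and_or, not_le] at this
      rcases this with h' | h'
      · left
        rw [ht, div_lt_iff₀ hv2, zero_mul, hnum'] at h'
        linarith
      · right
        rw [ht, lt_div_iff₀ hv2, one_mul, hnum'] at h'
        rw [hbab]; linarith
    · intro h hmem'
      have htIcc := hmem.1 hmem'
      rcases h with h | h
      · have : t < 0 := by
          rw [ht, div_lt_iff₀ hv2, zero_mul, hnum']; linarith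
        exact absurd htIcc.1 (not_le.2 this)
      · have : 1 < t := by
          rw [ht, lt_div_iff₀ hv2, one_mul, hnum']; rw [hbab] at h; linarith
        exact absurd htIcc.2 (not_le.2 this)

lemma thales {d : ℕ} (b : EuclideanSpace ℝ (Fin d)) :
    {a : EuclideanSpace ℝ (Fin d) | 0 < (inner ℝ a (b - a) : ℝ)} =
      Metric.ball ((1/2 : ℝ) • b) (‖b‖ / 2) := by
  ext a
  simp only [Set.mem_setOf_eq, mem_ball, dist_eq_norm]
  have h1 : ‖a - (1/2 : ℝ) • b‖ ^ 2 = ‖a‖^2 - (inner ℝ a b : ℝ) + ‖b‖^2/4 := by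
    rw [norm_sub_sq_real, real_inner_smul_right, norm_smul]
    simp [mul_pow]
    ring
  have h2 : (inner ℝ a (b - a) : ℝ) = (inner ℝ a b : ℝ) - ‖a‖^2 := by
    rw [inner_sub_right, real_inner_self_eq_norm_sq]
  constructor
  · intro h
    nlinarith [norm_nonneg (a - (1/2:ℝ) • b), norm_nonneg b]
  · intro h
    nlinarith [norm_nonneg (a - (1/2:ℝ) • b), norm_nonneg b]



lemma volB_pos (hd : 1 ≤ d) : 0 < volume (Metric.ball (0 : EuclideanSpace ℝ (Fin d)) 1) :=
  measure_ball_pos _ _ one_pos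

lemma volB_lt_top : volume (Metric.ball (0 : EuclideanSpace ℝ (Fin d)) 1) < ⊤ :=
  measure_ball_lt_top

lemma nontriv (hd : 1 ≤ d) : Nontrivial (EuclideanSpace ℝ (Fin d)) :=
  Module.nontrivial_of_finrank_pos (R := ℝ)
    (by rw [finrank_euclideanSpace_fin]; omega)

lemma volK_eq (hd : 1 ≤ d) :
    volume (Metric.closedBall (0 : EuclideanSpace ℝ (Fin d)) 1) =
      volume (Metric.ball (0 : EuclideanSpace ℝ (Fin d)) 1) := by
  haveI := nontriv hd
  exact Measure.addHaar_closedBall_eq_addHaar_ball _ _ _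

lemma unifBall_ball (hd : 1 ≤ d) (b : EuclideanSpace ℝ (Fin d)) (hb : ‖b‖ ≤ 1) :
    unifBall d (Metric.ball ((1/2 : ℝ) • b) (‖b‖ / 2)) =
      ENNReal.ofReal ((‖b‖ / 2) ^ d) := by
  haveI := nontriv hd
  have hsub : Metric.ball ((1/2 : ℝ) • b) (‖b‖ / 2) ⊆
      Metric.closedBall (0 : EuclideanSpace ℝ (Fin d)) 1 := by
    intro x hx
    rw [mem_ball, dist_eq_norm] at hx
    rw [mem_closedBall, dist_zero_right]
    have h1 : ‖x‖ ≤ ‖x - (1/2:ℝ) • b‖ + ‖(1/2:ℝ) • b‖ := by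
      simpa using norm_add_le (x - (1/2:ℝ) • b) ((1/2:ℝ) • b)
    have h2 : ‖(1/2:ℝ) • b‖ = ‖b‖ / 2 := by
      rw [norm_smul]; simp; ring
    linarith
  have hball : volume (Metric.ball ((1/2 : ℝ) • b) (‖b‖ / 2)) =
      ENNReal.ofReal ((‖b‖ / 2) ^ d) *
        volume (Metric.ball (0 : EuclideanSpace ℝ (Fin d)) 1) := by
    rw [Measure.addHaar_ball _ _ (by positivity), finrank_euclideanSpace_fin]
  rw [unifBall, Measure.smul_apply, smul_eq_mul,
    Measure.restrict_apply measurableSet_ball, Set.inter_eq_left.2 hsub, hball, volK_eq hd,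
    mul_comm (ENNReal.ofReal _), ← mul_assoc, ENNReal.inv_mul_cancel (volB_pos hd).ne'
      volB_lt_top.ne, one_mul]

lemma integral_norm_pow (hd : 1 ≤ d) :
    ∫ x in Metric.closedBall (0 : EuclideanSpace ℝ (Fin d)) 1, ‖x‖ ^ d ∂volume =
      (volume (Metric.ball (0 : EuclideanSpace ℝ (Fin d)) 1)).toReal / 2 := by
  haveI := nontriv hd
  set f : ℝ → ℝ := fun r => if r ≤ 1 then r ^ d else 0 with hf
  have key := MeasureTheory.integral_fun_norm_addHaar
    (volume : Measure (EuclideanSpace ℝ (Fin d))) f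
  have hdim : Module.finrank ℝ (EuclideanSpace ℝ (Fin d)) = d := finrank_euclideanSpace_fin
  rw [hdim] at key
  have hleft : (∫ x, f ‖x‖ ∂(volume : Measure (EuclideanSpace ℝ (Fin d)))) =
      ∫ x in Metric.closedBall (0 : EuclideanSpace ℝ (Fin d)) 1, ‖x‖ ^ d ∂volume := by
    rw [← integral_indicator measurableSet_closedBall]
    congr 1
    classical
    ext x
    rw [Set.indicator_apply]
    by_cases h : x ∈ Metric.closedBall (0 : EuclideanSpace ℝ (Fin d)) 1
    · rw [if_pos h]
      simp only [hf]
      rw [if_pos (by simpa [mem_closedBall, dist_zero_right] using h)]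
    · rw [if_neg h]
      simp only [hf]
      rw [if_neg (by simpa [mem_closedBall, dist_zero_right, not_le] using h)]
  have hright : (∫ y in Set.Ioi (0:ℝ), y ^ (d - 1) • f y) = 1 / (2 * d) := by
    have hcong : ∀ y ∈ Set.Ioi (0:ℝ), y ^ (d-1) • f y =
        Set.indicator (Set.Ioc (0:ℝ) 1) (fun y => y ^ (2*d - 1)) y := by
      intro y hy
      simp only [smul_eq_mul, hf, Set.indicator_apply, Set.mem_Ioc]
      by_cases h : y ≤ 1
      · simp only [h, if_true, hy.out, true_and]
        rw [← pow_add]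
        congr 1
        omega
      · simp [h]
    rw [setIntegral_congr_fun measurableSet_Ioi hcong, setIntegral_indicator measurableSet_Ioc]
    have : Set.Ioi (0:ℝ) ∩ Set.Ioc 0 1 = Set.Ioc 0 1 := by
      ext y; simp only [Set.mem_inter_iff, Set.mem_Ioi, Set.mem_Ioc]; tauto
    rw [this, ← intervalIntegral.integral_of_le (zero_le_one), integral_pow]
    have hc : ((2 * d - 1 : ℕ) : ℝ) + 1 = 2 * d := by
      rw [Nat.cast_sub (by omega : 1 ≤ 2 * d)]
      push_cast
      ring
    rw [hc, one_pow, zero_pow (by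
      have : 2 * d - 1 + 1 = 2 * d := by omega
      omega : 2 * d - 1 + 1 ≠ 0)]
    norm_num
  rw [hleft, hright] at key
  rw [key, nsmul_eq_mul, smul_eq_mul, measureReal_def]
  have hd0 : (d : ℝ) ≠ 0 := Nat.cast_ne_zero.2 (by omega)
  field_simp

lemma lintegral_norm_pow (hd : 1 ≤ d) :
    ∫⁻ x in Metric.closedBall (0 : EuclideanSpace ℝ (Fin d)) 1,
        ENNReal.ofReal (‖x‖ ^ d) ∂volume =
      ENNReal.ofReal ((volume (Metric.ball (0 : EuclideanSpace ℝ (Fin d)) 1)).toReal / 2) := by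
  rw [← integral_norm_pow hd, ← MeasureTheory.ofReal_integral_eq_lintegral_ofReal]
  · exact (ContinuousOn.integrableOn_compact (isCompact_closedBall _ _)
      ((continuous_norm.pow d).continuousOn))
  · exact Filter.Eventually.of_forall fun x => by positivity


theorem stmt1 {d : ℕ} (hd : 1 ≤ d)
    {Ω : Type*} [MeasurableSpace Ω] (P : Measure Ω) [IsProbabilityMeasure P]
    (A₁ A₂ : Ω → EuclideanSpace ℝ (Fin d))
    (h1 : Measurable A₁) (h2 : Measurable A₂)
    (hindep : IndepFun A₁ A₂ P)
    (hl1 : Measure.map A₁ P = unifBall d) (hl2 : Measure.map A₂ P = unifBall d) :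
    P {ω | proj0 (A₁ ω) (A₂ ω) ∉ segment ℝ (A₁ ω) (A₂ ω)} =
      ENNReal.ofReal ((1 : ℝ) / 2 ^ d) := by
  classical
  haveI hnt : Nontrivial (EuclideanSpace ℝ (Fin d)) := nontriv hd
  set μ := unifBall d with hμdef
  haveI : IsProbabilityMeasure μ := by
    constructor
    rw [hμdef, unifBall, Measure.smul_apply, Measure.restrict_apply MeasurableSet.univ,
      Set.univ_inter, smul_eq_mul]
    exact ENNReal.inv_mul_cancel (by rw [volK_eq hd]; exact (volB_pos hd).ne')
      measure_closedBall_lt_top.ne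
  set S₁ : Set (EuclideanSpace ℝ (Fin d) × EuclideanSpace ℝ (Fin d)) :=
    {p | 0 < (inner ℝ p.1 (p.2 - p.1) : ℝ)} with hS₁def
  set S₂ : Set (EuclideanSpace ℝ (Fin d) × EuclideanSpace ℝ (Fin d)) :=
    {p | 0 < (inner ℝ p.2 (p.1 - p.2) : ℝ)} with hS₂def
  have hS₁ : MeasurableSet S₁ := by
    have hc : Continuous fun p : EuclideanSpace ℝ (Fin d) × EuclideanSpace ℝ (Fin d) =>
        (inner ℝ p.1 (p.2 - p.1) : ℝ) :=
      continuous_inner.comp (continuous_fst.prodMk (continuous_snd.sub continuous_fst))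
    exact measurableSet_lt measurable_const hc.measurable
  have hS₂ : MeasurableSet S₂ := by
    have hc : Continuous fun p : EuclideanSpace ℝ (Fin d) × EuclideanSpace ℝ (Fin d) =>
        (inner ℝ p.2 (p.1 - p.2) : ℝ) :=
      continuous_inner.comp (continuous_snd.prodMk (continuous_fst.sub continuous_snd))
    exact measurableSet_lt measurable_const hc.measurable
  have hset : {ω | proj0 (A₁ ω) (A₂ ω) ∉ segment ℝ (A₁ ω) (A₂ ω)} =
      (fun ω => (A₁ ω, A₂ ω)) ⁻¹' (S₁ ∪ S₂) := by
    ext ω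
    simp only [Set.mem_setOf_eq, Set.mem_preimage, Set.mem_union, hS₁def, hS₂def,
      proj0_notMem_iff]
  have hmap : Measure.map (fun ω => (A₁ ω, A₂ ω)) P = μ.prod μ := by
    rw [(ProbabilityTheory.indepFun_iff_map_prod_eq_prod_map_map h1.aemeasurable
      h2.aemeasurable).mp hindep, hl1, hl2]
  rw [hset, ← Measure.map_apply (h1.prodMk h2) (hS₁.union hS₂), hmap]
  have hdisj : Disjoint S₁ S₂ := by
    rw [Set.disjoint_left]
    rintro ⟨a, b⟩ ha hb
    simp only [hS₁def, hS₂def, Set.mem_setOf_eq] at ha hb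
    have e : (inner ℝ a (b - a) : ℝ) + (inner ℝ b (a - b) : ℝ) = -‖a - b‖ ^ 2 := by
      have h1' : ‖a - b‖ ^ 2 = (inner ℝ (a - b) (a - b) : ℝ) :=
        (real_inner_self_eq_norm_sq _).symm
      simp only [inner_sub_left, inner_sub_right] at *
      nlinarith [real_inner_comm a b]
    nlinarith [sq_nonneg ‖a - b‖]
  rw [measure_union hdisj hS₂]
  have hswapset : S₂ = Prod.swap ⁻¹' S₁ := by
    ext p
    simp [hS₁def, hS₂def]
  have hswap : (μ.prod μ) S₂ = (μ.prod μ) S₁ := by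
    conv_lhs => rw [hswapset]
    rw [← Measure.map_apply measurable_swap hS₁, Measure.prod_swap]
  have hval : (μ.prod μ) S₁ = ENNReal.ofReal ((1:ℝ) / 2 ^ (d + 1)) := by
    rw [Measure.prod_apply_symm hS₁]
    have hpre : ∀ b : EuclideanSpace ℝ (Fin d),
        ((fun a => (a, b)) ⁻¹' S₁) = Metric.ball ((1/2 : ℝ) • b) (‖b‖ / 2) := by
      intro b
      rw [← thales b]
      ext a
      simp [hS₁def]
    simp_rw [hpre]
    have haec : ∀ᵐ b ∂μ, b ∈ Metric.closedBall (0 : EuclideanSpace ℝ (Fin d)) 1 := by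
      rw [hμdef, unifBall]
      exact Measure.ae_smul_measure (ae_restrict_mem measurableSet_closedBall) _
    have hcongr : (fun b => μ (Metric.ball ((1/2 : ℝ) • b) (‖b‖ / 2))) =ᵐ[μ]
        (fun b => ENNReal.ofReal ((‖b‖ / 2) ^ d)) :=
      haec.mono fun b hb => by
        rw [hμdef]
        exact unifBall_ball hd b (by simpa [mem_closedBall, dist_zero_right] using hb)
    rw [lintegral_congr_ae hcongr]
    rw [hμdef, unifBall, lintegral_smul_measure]
    have heq : ∀ b : EuclideanSpace ℝ (Fin d),
        ENNReal.ofReal ((‖b‖ / 2) ^ d) =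
          ENNReal.ofReal ((1/2 : ℝ) ^ d) * ENNReal.ofReal (‖b‖ ^ d) := by
      intro b
      rw [← ENNReal.ofReal_mul (by positivity)]
      congr 1
      rw [div_eq_mul_one_div ‖b‖ 2, mul_comm, mul_pow]
    simp_rw [heq]
    rw [lintegral_const_mul' _ _ ENNReal.ofReal_ne_top, lintegral_norm_pow hd]
    rw [volK_eq hd]
    set v := volume (Metric.ball (0 : EuclideanSpace ℝ (Fin d)) 1) with hv
    have hv0 : v ≠ 0 := (volB_pos hd).ne'
    have hvt : v ≠ ⊤ := volB_lt_top.ne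
    have h3 : ENNReal.ofReal (v.toReal / 2) = v * ENNReal.ofReal (1/2 : ℝ) := by
      rw [div_eq_mul_one_div, ENNReal.ofReal_mul ENNReal.toReal_nonneg,
        ENNReal.ofReal_toReal hvt]
    rw [h3]
    calc v⁻¹ * (ENNReal.ofReal ((1/2:ℝ)^d) * (v * ENNReal.ofReal (1/2:ℝ)))
        = (v⁻¹ * v) * (ENNReal.ofReal ((1/2:ℝ)^d) * ENNReal.ofReal (1/2:ℝ)) := by ring
      _ = ENNReal.ofReal ((1/2:ℝ)^d) * ENNReal.ofReal (1/2:ℝ) := by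
          rw [ENNReal.inv_mul_cancel hv0 hvt, one_mul]
      _ = ENNReal.ofReal ((1:ℝ) / 2 ^ (d+1)) := by
          rw [← ENNReal.ofReal_mul (by positivity)]
          congr 1
          rw [pow_succ]
          field_simp
          rw [← mul_pow]; norm_num
  rw [hswap, hval, ← ENNReal.ofReal_add (by positivity) (by positivity)]
  congr 1
  rw [pow_succ]
  field_simp
  ring


end
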